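/- For every integer n ≥ 2, the discrete Ricci curvature of the Hasse diagram of the strong Bruhat order of the symmetric group A_{n−1} = S_n satisfies Ric(H(A_{n−1})) ≥ −⌊n²/2⌋ − 2n + 8. -/

import Mathlib

/-- Graph Laplacian: `Δ(f)(x) = Σ_{v ∈ B(1,x)} (f(v) − f(x))`. -/
noncomputable def graphLap {V : Type*} (G : SimpleGraph V) (f : V → ℝ) (x : V) : ℝ :=
  ∑ᶠ v ∈ G.neighborSet x, (f v - f x)

/-- `Γ(f,g)(x) = (1/2) Σ_{v ∈ B(1,x)} (f(x) − f(v))(g(x) − g(v))`. -/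
noncomputable def graphGamma {V : Type*} (G : SimpleGraph V) (f g : V → ℝ) (x : V) : ℝ :=
  (1 / 2) * ∑ᶠ v ∈ G.neighborSet x, (f x - f v) * (g x - g v)

/-- `Γ₂(f)(x) = (1/2) Δ(Γ(f,f))(x) − Γ(f, Δ(f))(x)`. -/
noncomputable def graphGamma2 {V : Type*} (G : SimpleGraph V) (f : V → ℝ) (x : V) : ℝ :=
  (1 / 2) * graphLap G (fun y => graphGamma G f f y) x - graphGamma G f (graphLap G f) x

/-- The discrete Ricci curvature of a graph: the largest `K ∈ ℝ ∪ {−∞}` such that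
`Γ₂(f)(x) ≥ K·Γ(f)(x)` for all `f` and all vertices `x`. -/
noncomputable def graphRic {V : Type*} (G : SimpleGraph V) : EReal :=
  sSup (Real.toEReal '' {K : ℝ | ∀ (f : V → ℝ) (x : V),
    K * graphGamma G f f x ≤ graphGamma2 G f x})

/-- The local discrete Ricci curvature of a graph at a vertex `x`. -/
noncomputable def graphRicAt {V : Type*} (G : SimpleGraph V) (x : V) : EReal :=
  sSup (Real.toEReal '' {K : ℝ | ∀ f : V → ℝ,
    K * graphGamma G f f x ≤ graphGamma2 G f x})

/-- The Bruhat order on a Coxeter group: `u ≤ v` iff there is a chain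
`u = w_0 → w_1 → ⋯ → w_k = v` where each step multiplies on the left by a
reflection and strictly increases the length. -/
def CoxeterSystem.bruhatLE {B : Type*} {W : Type*} [Group W] {M : CoxeterMatrix B}
    (cs : CoxeterSystem M W) : W → W → Prop :=
  Relation.ReflTransGen (fun u v =>
    (∃ t, cs.IsReflection t ∧ v = t * u) ∧ cs.length u < cs.length v)

/-- The strict Bruhat order. -/
def CoxeterSystem.bruhatLT {B : Type*} {W : Type*} [Group W] {M : CoxeterMatrix B}
    (cs : CoxeterSystem M W) (u v : W) : Prop :=
  cs.bruhatLE u v ∧ u ≠ v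

/-- `v` covers `u` in the Bruhat order. -/
def CoxeterSystem.bruhatCovBy {B : Type*} {W : Type*} [Group W] {M : CoxeterMatrix B}
    (cs : CoxeterSystem M W) (u v : W) : Prop :=
  cs.bruhatLT u v ∧ ¬∃ θ, cs.bruhatLT u θ ∧ cs.bruhatLT θ v

/-- The Hasse diagram of the (strong) Bruhat order of a Coxeter group, as a simple
graph: `u` and `v` are adjacent iff one covers the other. -/
def CoxeterSystem.bruhatHasse {B : Type*} {W : Type*} [Group W] {M : CoxeterMatrix B}
    (cs : CoxeterSystem M W) : SimpleGraph W :=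
  SimpleGraph.fromRel cs.bruhatCovBy

/-!
Expanding `Γ₂(f)(x)` over the neighbours `v` of `x` and completing the square over the
neighbours of each `v` gives `Γ₂(f)(x) ≥ (2 - N)·Γ(f)(x)` on any graph of maximal degree
`N`, and `Γ₂ ≥ 2Γ` when `N ≤ 1`.

In the Bruhat graph every neighbour of `u` is `t * u` for a reflection `t`, so the degree
is bounded by the number of reflections. In type `A_{n-1}` the adjacent transpositions
satisfy the Coxeter relations, giving a surjection `W → S_n`. The words `s_{k+1-j} ⋯ s_k`
(`j ≤ k + 1`) represent all left cosets of `⟨s_0, …, s_{k-1}⟩` in `⟨s_0, …, s_k⟩`, so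
`|W| ≤ n!`; hence `W ≅ S_n`, reflections become transpositions, and there are at most
`n.choose 2` of them. Finally `-⌊n²/2⌋ - 2n + 8 ≤ 2 - n.choose 2` for `n ≥ 3`, while
`n = 2` is the case `N = 1`.
-/

section Curvature

variable {V : Type*} (G : SimpleGraph V)

theorem le_graphRic {K : ℝ} (h : ∀ f x, K * graphGamma G f f x ≤ graphGamma2 G f x) :
    (K : EReal) ≤ graphRic G :=
  le_sSup ⟨K, h, rfl⟩

variable [G.LocallyFinite] (f : V → ℝ)

theorem graphLap_eq_sum (x : V) :
    graphLap G f x = ∑ v ∈ G.neighborFinset x, (f v - f x) := by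
  rw [graphLap, ← G.coe_neighborFinset, finsum_mem_coe_finset]

theorem graphGamma_eq_sum (g : V → ℝ) (x : V) :
    graphGamma G f g x = 1 / 2 * ∑ v ∈ G.neighborFinset x, (f x - f v) * (g x - g v) := by
  rw [graphGamma, ← G.coe_neighborFinset, finsum_mem_coe_finset]

theorem graphGamma_self_nonneg (x : V) : 0 ≤ graphGamma G f f x := by
  rw [graphGamma_eq_sum]
  exact mul_nonneg (by norm_num) (Finset.sum_nonneg fun _ _ => mul_self_nonneg _)

theorem graphGamma2_eq_sum (x : V) :
    graphGamma2 G f x = ∑ v ∈ G.neighborFinset x,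
        (graphGamma G f f v + (f x - f v) * graphLap G f v) / 2
      - G.degree x / 2 * graphGamma G f f x + graphLap G f x ^ 2 / 2 := by
  have hsum : ∑ v ∈ G.neighborFinset x, (f x - f v) = -graphLap G f x := by
    rw [graphLap_eq_sum, ← Finset.sum_neg_distrib]
    simp only [neg_sub]
  rw [graphGamma2, graphLap_eq_sum G (fun y => graphGamma G f f y) x,
    graphGamma_eq_sum G f (graphLap G f) x, ← G.card_neighborFinset_eq_degree]
  simp only [mul_sub, Finset.sum_sub_distrib, ← Finset.sum_div, Finset.sum_add_distrib,
    ← Finset.sum_mul, hsum, Finset.sum_const, nsmul_eq_mul]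
  ring

theorem sq_sub_le_of_adj {x v : V} (h : G.Adj x v) :
    (f x - f v) ^ 2 ≤ (graphGamma G f f v + (f x - f v) * graphLap G f v) / 2
      + G.degree v / 4 * (f x - f v) ^ 2 := by
  have hsq : (graphGamma G f f v + (f x - f v) * graphLap G f v) / 2
      + G.degree v / 4 * (f x - f v) ^ 2
      = ∑ w ∈ G.neighborFinset v, ((f w + f x - 2 * f v) / 2) ^ 2 := by
    rw [graphGamma_eq_sum, graphLap_eq_sum, ← G.card_neighborFinset_eq_degree,
      Finset.card_eq_sum_ones, Nat.cast_sum]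
    simp only [Finset.mul_sum, Finset.sum_mul, Finset.sum_div, ← Finset.sum_add_distrib]
    refine Finset.sum_congr rfl fun w _ => ?_
    push_cast
    ring
  rw [hsq]
  calc (f x - f v) ^ 2 = ((f x + f x - 2 * f v) / 2) ^ 2 := by ring
    _ ≤ _ := Finset.single_le_sum (f := fun w => ((f w + f x - 2 * f v) / 2) ^ 2)
        (fun _ _ => sq_nonneg _) ((G.mem_neighborFinset v x).2 h.symm)

theorem le_graphGamma2_of_degree_le {N : ℕ} (hN : ∀ v, G.degree v ≤ N) (x : V) :
    (2 - N / 2 - G.degree x / 2) * graphGamma G f f x + graphLap G f x ^ 2 / 2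
      ≤ graphGamma2 G f x := by
  have hterm : ∀ v ∈ G.neighborFinset x, (1 - N / 4) * (f x - f v) ^ 2
      ≤ (graphGamma G f f v + (f x - f v) * graphLap G f v) / 2 := by
    intro v hv
    have hv := sq_sub_le_of_adj G f ((G.mem_neighborFinset x v).1 hv)
    have hdeg : (G.degree v : ℝ) ≤ N := by exact_mod_cast hN v
    nlinarith [sq_nonneg (f x - f v)]
  have hΓ : ∑ v ∈ G.neighborFinset x, (f x - f v) ^ 2 = 2 * graphGamma G f f x := by
    rw [graphGamma_eq_sum]
    simp only [sq]
    ring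
  have hsum := Finset.sum_le_sum hterm
  rw [← Finset.mul_sum, hΓ] at hsum
  rw [graphGamma2_eq_sum]
  linarith

theorem sq_graphLap_eq_of_degree_le_one {x : V} (hx : G.degree x ≤ 1) :
    graphLap G f x ^ 2 = 2 * graphGamma G f f x := by
  have : Nonempty V := ⟨x⟩
  rw [← G.card_neighborFinset_eq_degree, Finset.card_le_one_iff_subset_singleton] at hx
  obtain ⟨v, hv⟩ := hx
  rw [graphLap_eq_sum, graphGamma_eq_sum]
  rcases Finset.subset_singleton_iff.1 hv with h | h <;> rw [h] <;> simp
  ring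

theorem two_sub_le_graphRic_of_degree_le {N : ℕ} (hN : ∀ v, G.degree v ≤ N) :
    ((2 - N : ℝ) : EReal) ≤ graphRic G :=
  le_graphRic G fun f x => by
    have hx : (G.degree x : ℝ) ≤ N := by exact_mod_cast hN x
    nlinarith [le_graphGamma2_of_degree_le G f hN x, graphGamma_self_nonneg G f x,
      sq_nonneg (graphLap G f x)]

theorem two_le_graphRic_of_degree_le_one (h : ∀ v, G.degree v ≤ 1) :
    (2 : EReal) ≤ graphRic G :=
  le_graphRic G (K := 2) fun f x => by
    have hx : (G.degree x : ℝ) ≤ 1 := by exact_mod_cast h x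
    nlinarith [le_graphGamma2_of_degree_le G f h x, graphGamma_self_nonneg G f x,
      sq_graphLap_eq_of_degree_le_one G f (h x)]

end Curvature

namespace Equiv.Perm

variable {α : Type*} [DecidableEq α]

theorem swap_mul_swap_pow_three [Fintype α] {a b c : α} (hab : a ≠ b) (hac : a ≠ c)
    (hbc : b ≠ c) : (swap a b * swap a c) ^ 3 = 1 :=
  (isThreeCycle_swap_mul_swap_same hab hac hbc).orderOf ▸ pow_orderOf_eq_one _

theorem ncard_setOf_isSwap_le [Finite α] :
    {σ : Perm α | σ.IsSwap}.ncard ≤ (Nat.card α).choose 2 := by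
  let toSwap : Sym2 α → Perm α := Sym2.lift ⟨swap, swap_comm⟩
  have hsub : {σ : Perm α | σ.IsSwap} ⊆ toSwap '' (Sym2.diagSet)ᶜ := by
    rintro _ ⟨a, b, hab, rfl⟩
    exact ⟨s(a, b), by simpa using hab, rfl⟩
  calc {σ : Perm α | σ.IsSwap}.ncard ≤ (toSwap '' (Sym2.diagSet)ᶜ).ncard :=
        Set.ncard_le_ncard hsub
    _ ≤ (Sym2.diagSet : Set (Sym2 α))ᶜ.ncard := Set.ncard_image_le
    _ = (Nat.card α).choose 2 := Sym2.ncard_diagSet_compl α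

end Equiv.Perm

theorem CoxeterMatrix.A_apply {m : ℕ} (i j : Fin m) : CoxeterMatrix.A m i j =
    if i = j then 1 else if (j : ℕ) + 1 = i ∨ (i : ℕ) + 1 = j then 3 else 2 :=
  rfl

open Equiv Equiv.Perm in
theorem CoxeterMatrix.isLiftable_A_swap (m : ℕ) :
    (CoxeterMatrix.A m).IsLiftable fun i : Fin m => swap i.castSucc i.succ := by
  intro i j
  rw [A_apply]
  beta_reduce
  by_cases hij : i = j
  · rw [if_pos hij, hij, pow_one, swap_mul_self]
  rw [if_neg hij]
  by_cases hadj : (j : ℕ) + 1 = i ∨ (i : ℕ) + 1 = j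
  · rw [if_pos hadj]
    rcases hadj with hji | hij
    · rw [show j.succ = i.castSucc from Fin.ext (by simp [hji]), swap_comm j.castSucc]
      refine swap_mul_swap_pow_three ?_ ?_ ?_ <;> grind [Fin.ext_iff, Fin.val_castSucc]
    · rw [show i.succ = j.castSucc from Fin.ext (by simp [hij]), swap_comm i.castSucc]
      refine swap_mul_swap_pow_three ?_ ?_ ?_ <;> grind [Fin.ext_iff, Fin.val_castSucc]
  · rw [if_neg hadj]
    have hdisj : (swap i.castSucc i.succ).Disjoint (swap j.castSucc j.succ) :=
      disjoint_swap_swap (by grind [Fin.ext_iff, Fin.val_castSucc])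
    rw [hdisj.commute.mul_pow, sq, sq, swap_mul_self, swap_mul_self, one_mul]

namespace CoxeterSystem

section

variable {B W : Type*} [Group W] {M : CoxeterMatrix B} (cs : CoxeterSystem M W)

theorem commute_simple_of_eq_two {i i' : B} (h : M i i' = 2) :
    Commute (cs.simple i) (cs.simple i') := by
  have := cs.wordProd_braidWord_eq i i'
  rw [braidWord, braidWord, M.symmetric i' i, h] at this
  simpa [alternatingWord, wordProd, Commute, SemiconjBy] using this

theorem simple_braid_of_eq_three {i i' : B} (h : M i i' = 3) :
    cs.simple i * cs.simple i' * cs.simple i = cs.simple i' * cs.simple i * cs.simple i' := by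
  have := cs.wordProd_braidWord_eq i i'
  rw [braidWord, braidWord, M.symmetric i' i, h] at this
  simpa [alternatingWord, wordProd, mul_assoc] using this.symm

theorem exists_isReflection_of_bruhatCovBy {u v : W} (h : cs.bruhatCovBy u v) :
    ∃ t, cs.IsReflection t ∧ v = t * u := by
  obtain ⟨⟨hle, hne⟩, hcov⟩ := h
  obtain rfl | ⟨c, hstep, hrest⟩ := Relation.ReflTransGen.cases_head hle
  · exact absurd rfl hne
  obtain rfl | hcv := eq_or_ne c v
  · exact hstep.1
  · refine absurd ⟨c, ⟨.single hstep, ?_⟩, hrest, hcv⟩ hcov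
    rintro rfl
    exact lt_irrefl _ hstep.2

theorem neighborSet_bruhatHasse_subset (u : W) :
    cs.bruhatHasse.neighborSet u ⊆ (· * u) '' {t | cs.IsReflection t} := by
  intro v huv
  obtain ⟨-, h | h⟩ := (SimpleGraph.fromRel_adj _ _ _).1 huv
  · obtain ⟨t, ht, rfl⟩ := cs.exists_isReflection_of_bruhatCovBy h
    exact ⟨t, ht, rfl⟩
  · obtain ⟨t, ht, rfl⟩ := cs.exists_isReflection_of_bruhatCovBy h
    exact ⟨t, ht, show t * (t * v) = v by rw [← mul_assoc, ht.mul_self, one_mul]⟩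

theorem ncard_neighborSet_bruhatHasse_le (u : W) (hfin : {t | cs.IsReflection t}.Finite) :
    (cs.bruhatHasse.neighborSet u).ncard ≤ {t | cs.IsReflection t}.ncard :=
  (Set.ncard_le_ncard (cs.neighborSet_bruhatHasse_subset u) (hfin.image _)).trans
    (Set.ncard_image_le hfin)

end

section

open Equiv
open scoped Nat

variable {W : Type*} [Group W] {m : ℕ} (cs : CoxeterSystem (CoxeterMatrix.A m) W)

/-- `s_i` for every `i : ℕ`, with the junk value `1` for `i ≥ m`, so that index arithmetic on
words needs no bound proofs. -/
noncomputable def simpleNat (i : ℕ) : W := if h : i < m then cs.simple ⟨i, h⟩ else 1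

theorem simpleNat_mul_self (i : ℕ) : cs.simpleNat i * cs.simpleNat i = 1 := by
  unfold simpleNat
  split_ifs
  exacts [cs.simple_mul_simple_self _, mul_one 1]

theorem commute_simpleNat {i j : ℕ} (h : i + 2 ≤ j) :
    Commute (cs.simpleNat i) (cs.simpleNat j) := by
  unfold simpleNat
  split_ifs with hi hj
  · refine cs.commute_simple_of_eq_two ?_
    rw [CoxeterMatrix.A_apply, if_neg (by simp [Fin.ext_iff]; omega), if_neg (by simp; omega)]
  all_goals simp

theorem simpleNat_braid {i : ℕ} (h : i + 1 < m) :
    cs.simpleNat i * cs.simpleNat (i + 1) * cs.simpleNat i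
      = cs.simpleNat (i + 1) * cs.simpleNat i * cs.simpleNat (i + 1) := by
  unfold simpleNat
  rw [dif_pos (by omega), dif_pos h]
  refine cs.simple_braid_of_eq_three ?_
  rw [CoxeterMatrix.A_apply, if_neg (by simp [Fin.ext_iff]), if_pos (by simp)]

/-- `cosetRep k j = s_{k+1-j} ⋯ s_{k-1} s_k`, a word of `j` letters. -/
noncomputable def cosetRep (k : ℕ) : ℕ → W
  | 0 => 1
  | j + 1 => cs.simpleNat (k - j) * cosetRep k j

theorem simpleNat_mul_cosetRep_succ (k j : ℕ) :
    cs.simpleNat (k - j) * cs.cosetRep k (j + 1) = cs.cosetRep k j := by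
  rw [cosetRep, ← mul_assoc, simpleNat_mul_self, one_mul]

theorem commute_simpleNat_cosetRep {i k j : ℕ} (h : i + j + 1 ≤ k) :
    Commute (cs.simpleNat i) (cs.cosetRep k j) := by
  induction j with
  | zero => exact Commute.one_right _
  | succ j ih => exact (cs.commute_simpleNat (by omega)).mul_right (ih (by omega))

theorem simpleNat_succ_mul_cosetRep {i k j : ℕ} (hk : k < m) (hj : j ≤ k + 1)
    (hij : k + 1 ≤ i + j) (hik : i < k) :
    cs.simpleNat (i + 1) * cs.cosetRep k j = cs.cosetRep k j * cs.simpleNat i := by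
  induction j with
  | zero => omega
  | succ j ih =>
    rw [cosetRep]
    rcases Nat.lt_or_ge (i + j) (k + 1) with hlt | hge
    · obtain ⟨j, rfl⟩ : ∃ j', j = j' + 1 := ⟨j - 1, by omega⟩
      have hi : k - (j + 1) = i := by omega
      have hi' : k - j = i + 1 := by omega
      rw [cosetRep, hi, hi', ← mul_assoc, ← mul_assoc, ← simpleNat_braid cs (by omega),
        mul_assoc, (cs.commute_simpleNat_cosetRep (by omega)).eq]
      simp only [mul_assoc]
    · rw [← mul_assoc, ((cs.commute_simpleNat (by omega)).eq).symm, mul_assoc,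
        ih (by omega) hge, mul_assoc]

section NormalForms

open scoped Pointwise

variable [DecidableEq W]

noncomputable def normalForms : ℕ → Finset W
  | 0 => {1}
  | k + 1 => (Finset.range (k + 2)).image (cs.cosetRep k) * normalForms k

theorem mem_normalForms_succ {k : ℕ} {w : W} :
    w ∈ cs.normalForms (k + 1) ↔
      ∃ j ≤ k + 1, ∃ u ∈ cs.normalForms k, cs.cosetRep k j * u = w := by
  simp [normalForms, Finset.mem_mul, Nat.lt_succ_iff]

theorem one_mem_normalForms (k : ℕ) : 1 ∈ cs.normalForms k := by
  induction k with
  | zero => exact Finset.mem_singleton_self 1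
  | succ k ih => exact cs.mem_normalForms_succ.2 ⟨0, by omega, 1, ih, mul_one 1⟩

theorem simpleNat_mul_mem_normalForms {k i : ℕ} (hk : k ≤ m) (hi : i < k) {u : W}
    (hu : u ∈ cs.normalForms k) : cs.simpleNat i * u ∈ cs.normalForms k := by
  induction k generalizing i u with
  | zero => omega
  | succ k ih =>
    obtain ⟨j, hj, v, hv, rfl⟩ := cs.mem_normalForms_succ.1 hu
    rw [← mul_assoc, mem_normalForms_succ]
    -- `s_i` commutes with, extends, cancels against, or slides through `cosetRep k j`
    obtain h | h | h | h : i + j < k ∨ i + j = k ∨ i + j = k + 1 ∨ k + 2 ≤ i + j := by omega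
    · rw [(cs.commute_simpleNat_cosetRep (by omega)).eq, mul_assoc]
      exact ⟨j, hj, _, ih (by omega) (by omega) hv, rfl⟩
    · obtain rfl : i = k - j := by omega
      exact ⟨j + 1, by omega, v, hv, rfl⟩
    · obtain ⟨j, rfl⟩ : ∃ j', j = j' + 1 := ⟨j - 1, by omega⟩
      obtain rfl : i = k - j := by omega
      rw [simpleNat_mul_cosetRep_succ]
      exact ⟨j, by omega, v, hv, rfl⟩
    · obtain ⟨i, rfl⟩ : ∃ i', i = i' + 1 := ⟨i - 1, by omega⟩
      rw [cs.simpleNat_succ_mul_cosetRep (by omega) hj (by omega) (by omega), mul_assoc]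
      exact ⟨j, hj, _, ih (by omega) (by omega) hv, rfl⟩

theorem card_normalForms_le (k : ℕ) : (cs.normalForms k).card ≤ (k + 1)! := by
  induction k with
  | zero => simp [normalForms]
  | succ k ih =>
    calc (cs.normalForms (k + 1)).card
        ≤ ((Finset.range (k + 2)).image (cs.cosetRep k)).card * (cs.normalForms k).card :=
          Finset.card_mul_le
      _ ≤ (k + 2) * (k + 1)! := Nat.mul_le_mul (Finset.card_image_le.trans (by simp)) ih
      _ = (k + 2)! := (Nat.factorial_succ (k + 1)).symm

theorem mem_normalForms (w : W) : w ∈ cs.normalForms m :=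
  cs.simple_induction_left w (cs.one_mem_normalForms m) fun u i hu => by
    simpa [simpleNat, i.isLt] using cs.simpleNat_mul_mem_normalForms le_rfl i.isLt hu

end NormalForms

theorem finite_of_A (cs : CoxeterSystem (CoxeterMatrix.A m) W) : Finite W := by
  classical
  exact Set.finite_univ_iff.1
    ((cs.normalForms m).finite_toSet.subset fun w _ => cs.mem_normalForms w)

theorem natCard_le_factorial (cs : CoxeterSystem (CoxeterMatrix.A m) W) :
    Nat.card W ≤ (m + 1)! := by
  classical
  calc Nat.card W = (Set.univ : Set W).ncard := (Set.ncard_univ W).symm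
    _ ≤ (cs.normalForms m : Set W).ncard := Set.ncard_le_ncard fun w _ => cs.mem_normalForms w
    _ = (cs.normalForms m).card := Set.ncard_coe_finset _
    _ ≤ (m + 1)! := cs.card_normalForms_le m

noncomputable def toPerm : W →* Perm (Fin (m + 1)) :=
  cs.lift ⟨_, CoxeterMatrix.isLiftable_A_swap m⟩

theorem toPerm_simple (i : Fin m) : cs.toPerm (cs.simple i) = swap i.castSucc i.succ :=
  cs.lift_apply_simple _ i

theorem toPerm_surjective : Function.Surjective cs.toPerm := by
  rw [← MonoidHom.mrange_eq_top, eq_top_iff, ← Perm.mclosure_swap_castSucc_succ,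
    Submonoid.closure_le]
  rintro _ ⟨i, rfl⟩
  exact ⟨cs.simple i, cs.toPerm_simple i⟩

theorem toPerm_bijective : Function.Bijective cs.toPerm := by
  have := cs.finite_of_A
  refine (Nat.bijective_iff_surjective_and_card _).2 ⟨cs.toPerm_surjective, ?_⟩
  refine le_antisymm ?_ (Nat.card_le_card_of_surjective _ cs.toPerm_surjective)
  rw [Nat.card_perm, Nat.card_fin]
  exact cs.natCard_le_factorial

theorem isSwap_toPerm {t : W} (ht : cs.IsReflection t) : (cs.toPerm t).IsSwap := by
  obtain ⟨w, i, rfl⟩ := ht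
  rw [map_mul, map_mul, map_inv, toPerm_simple, ← swap_apply_apply]
  exact ⟨_, _, (cs.toPerm w).injective.ne Fin.castSucc_lt_succ.ne, rfl⟩

theorem ncard_setOf_isReflection_le : {t | cs.IsReflection t}.ncard ≤ (m + 1).choose 2 := by
  rw [← Set.ncard_image_of_injective _ cs.toPerm_bijective.injective]
  calc (cs.toPerm '' {t | cs.IsReflection t}).ncard
        ≤ {σ : Perm (Fin (m + 1)) | σ.IsSwap}.ncard :=
        Set.ncard_le_ncard (Set.image_subset_iff.2 fun _ => cs.isSwap_toPerm)
    _ ≤ (m + 1).choose 2 := by simpa using Perm.ncard_setOf_isSwap_le (α := Fin (m + 1))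

theorem degree_bruhatHasse_le (u : W) [Fintype (cs.bruhatHasse.neighborSet u)] :
    cs.bruhatHasse.degree u ≤ (m + 1).choose 2 := by
  have := cs.finite_of_A
  rw [← SimpleGraph.card_neighborSet_eq_degree, ← Nat.card_eq_fintype_card,
    Nat.card_coe_set_eq]
  exact (cs.ncard_neighborSet_bruhatHasse_le u (Set.toFinite _)).trans
    cs.ncard_setOf_isReflection_le

end

end CoxeterSystem

/-- For every `n ≥ 2`, the discrete Ricci curvature of the Hasse diagram of the strong
Bruhat order of the symmetric group `A_{n−1} = S_n` satisfies
`Ric(H(A_{n−1})) ≥ −⌊n²/2⌋ − 2n + 8`. -/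
theorem ric_hasse_A (n : ℕ) (hn : 2 ≤ n) :
    ((-((n ^ 2 / 2 : ℕ) : ℝ) - 2 * (n : ℝ) + 8 : ℝ) : EReal)
      ≤ graphRic (CoxeterMatrix.Aₙ (n - 1)).toCoxeterSystem.bruhatHasse := by
  classical
  change _ ≤ graphRic (CoxeterMatrix.A (n - 1)).toCoxeterSystem.bruhatHasse
  set cs := (CoxeterMatrix.A (n - 1)).toCoxeterSystem
  have := cs.finite_of_A
  have := Fintype.ofFinite (CoxeterMatrix.A (n - 1)).Group
  have hdeg : ∀ u, cs.bruhatHasse.degree u ≤ n.choose 2 := fun u => by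
    simpa [Nat.sub_add_cancel (by omega : 1 ≤ n)] using cs.degree_bruhatHasse_le u
  obtain rfl | hn := hn.eq_or_lt
  · norm_num
    exact two_le_graphRic_of_degree_le_one _ hdeg
  · have hchoose : n.choose 2 + 6 ≤ n ^ 2 / 2 + 2 * n := by
      rw [Nat.choose_two_right, sq]
      have := Nat.div_le_div_right (c := 2) (Nat.mul_le_mul_left n (Nat.sub_le n 1))
      omega
    refine le_trans ?_ (two_sub_le_graphRic_of_degree_le _ hdeg)
    have : ((n.choose 2 : ℕ) : ℝ) + 6 ≤ ((n ^ 2 / 2 : ℕ) : ℝ) + 2 * n := by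
      exact_mod_cast hchoose
    exact EReal.coe_le_coe_iff.2 (by linarith)
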